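/- arXiv:1206.4224 — 3 statements merged into one kernel-verified Lean document; each statement's English description precedes it below -/
import Mathlib

section
/- For every k ≥ 3, the polynomial P_k(X) = −1 + (1+X)^{2k+3} − Σ_{j=0}^{k} a_j X^{2j+1}(1+X)^{k+1−j}, where a_j = ((2k+3)/(2j+1))·(k+1+j choose k+1−j), satisfies P_k(X) = X^{2k+3}. In particular, there exists a nonzero (k+3)-term polynomial of the form Σ_j c_j X^{α_j}(1+X)^{β_j} with min_j α_j = 0 and valuation 2k+3 = 2(k+3)−3. -/
open Polynomial

/-!
Write `u = 1 + X`, so that `u ^ 2 - 1 = X * (2 + X)`. The polynomials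
`E m = ∑ C(m+j, 2j) X^(2j) u^(m-j)` and `O m = ∑ C(m+1+j, 2j+1) X^(2j+1) u^(m-j)` satisfy, by Pascal's
rule, `E (m+1) = u E m + X O m` and `O (m+1) = u O m + X E (m+1)`, hence by induction
`(2 + X) E m = u^(2m+1) + 1` and `(2 + X) O m = u^(2m+2) - 1`. Since
`a_j = C(k+1+j, 2j+1) + C(k+2+j, 2j+1)`, the sum in the theorem is `u O k + O (k+1) - X^(2k+3)`, and
`(2 + X) (u O k + O (k+1)) = (2 + X) (u^(2k+3) - 1)`; the monic factor `2 + X` cancels.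
-/

theorem Nat.two_mul_add_one_mul_choose_add_choose {n j : ℕ} (h : j ≤ n) :
    (2 * j + 1) * ((n + j).choose (2 * j + 1) + (n + 1 + j).choose (2 * j + 1))
      = (2 * n + 1) * (n + j).choose (n - j) := by
  have h1 := Nat.choose_succ_right_eq (n + j) (2 * j)
  have h2 := Nat.add_one_mul_choose_eq (n + j) (2 * j)
  rw [Nat.choose_symm_of_eq_add (by omega : n + j = (n - j) + 2 * j), show n + 1 + j = n + j + 1 by omega]
  obtain ⟨d, rfl⟩ : ∃ d, n = j + d := ⟨n - j, by omega⟩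
  rw [show j + d + j - 2 * j = d by omega] at h1
  linarith

section

variable {R : Type*} [CommRing R]

noncomputable def evenChooseSum (m : ℕ) : R[X] :=
  ∑ j ∈ Finset.range (m + 1), ((m + j).choose (2 * j) : R[X]) * X ^ (2 * j) * (1 + X) ^ (m - j)

noncomputable def oddChooseSum (m : ℕ) : R[X] :=
  ∑ j ∈ Finset.range (m + 1),
    ((m + 1 + j).choose (2 * j + 1) : R[X]) * X ^ (2 * j + 1) * (1 + X) ^ (m - j)

theorem one_add_X_mul_oddChooseSum (m : ℕ) :
    (1 + X) * oddChooseSum m = ∑ j ∈ Finset.range (m + 1),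
      ((m + 1 + j).choose (2 * j + 1) : R[X]) * X ^ (2 * j + 1) * (1 + X) ^ (m + 1 - j) := by
  rw [oddChooseSum, Finset.mul_sum]
  refine Finset.sum_congr rfl fun j hj => ?_
  rw [Nat.sub_add_comm (Finset.mem_range_succ_iff.mp hj), pow_succ]
  ring

theorem oddChooseSum_succ_eq_sum_add_X_pow (m : ℕ) :
    oddChooseSum (m + 1) = ∑ j ∈ Finset.range (m + 1),
      ((m + 2 + j).choose (2 * j + 1) : R[X]) * X ^ (2 * j + 1) * (1 + X) ^ (m + 1 - j)
      + X ^ (2 * m + 3) := by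
  rw [oddChooseSum, Finset.sum_range_succ, Nat.sub_self, show m + 1 + 1 + (m + 1) = 2 * (m + 1) + 1 by omega,
    Nat.choose_self]
  simp [show 2 * (m + 1) + 1 = 2 * m + 3 by omega]

theorem evenChooseSum_succ (m : ℕ) :
    (evenChooseSum (m + 1) : R[X]) = (1 + X) * evenChooseSum m + X * oddChooseSum m := by
  have hodd : X * oddChooseSum m = ∑ j ∈ Finset.range (m + 1),
      ((m + 1 + j).choose (2 * j + 1) : R[X]) * X ^ (2 * (j + 1)) * (1 + X) ^ (m - j) := by
    rw [oddChooseSum, Finset.mul_sum]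
    exact Finset.sum_congr rfl fun j _ => by ring
  have heven : (1 + X) * evenChooseSum m = (1 + X) ^ (m + 1) + ∑ j ∈ Finset.range (m + 1),
      ((m + 1 + j).choose (2 * (j + 1)) : R[X]) * X ^ (2 * (j + 1)) * (1 + X) ^ (m - j) := by
    rw [Finset.sum_range_succ, Nat.choose_eq_zero_of_lt (by omega : m + 1 + m < 2 * (m + 1)),
      evenChooseSum, Finset.mul_sum, Finset.sum_range_succ']
    simp only [Nat.cast_zero, zero_mul, add_zero]
    rw [add_comm]
    congr 1
    · simp only [mul_zero, Nat.choose_zero_right, Nat.cast_one, pow_zero, Nat.sub_zero]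
      ring
    · refine Finset.sum_congr rfl fun j hj => ?_
      rw [show m + (j + 1) = m + 1 + j by omega, show m - j = m - (j + 1) + 1 by
        have := Finset.mem_range.mp hj; omega, pow_succ]
      ring
  rw [heven, hodd, add_assoc, ← Finset.sum_add_distrib]
  unfold evenChooseSum
  rw [Finset.sum_range_succ']
  simp only [Nat.choose_zero_right, mul_zero, pow_zero, Nat.cast_one, one_mul, Nat.sub_zero]
  rw [add_comm]
  congr 1
  refine Finset.sum_congr rfl fun j _ => ?_
  rw [show m + 1 + (j + 1) = m + 1 + j + 1 by omega, show 2 * (j + 1) = 2 * j + 1 + 1 by omega,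
    Nat.choose_succ_succ', Nat.add_sub_add_right]
  push_cast
  ring

theorem oddChooseSum_succ (m : ℕ) :
    (oddChooseSum (m + 1) : R[X]) = (1 + X) * oddChooseSum m + X * evenChooseSum (m + 1) := by
  have hodd : (1 + X) * oddChooseSum m = ∑ j ∈ Finset.range (m + 2),
      ((m + 1 + j).choose (2 * j + 1) : R[X]) * X ^ (2 * j + 1) * (1 + X) ^ (m + 1 - j) := by
    rw [Finset.sum_range_succ, Nat.choose_eq_zero_of_lt (by omega : m + 1 + (m + 1) < 2 * (m + 1) + 1),
      Nat.cast_zero, zero_mul, zero_mul, add_zero, one_add_X_mul_oddChooseSum]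
  have heven : X * evenChooseSum (m + 1) = ∑ j ∈ Finset.range (m + 2),
      ((m + 1 + j).choose (2 * j) : R[X]) * X ^ (2 * j + 1) * (1 + X) ^ (m + 1 - j) := by
    rw [evenChooseSum, Finset.mul_sum]
    exact Finset.sum_congr rfl fun j _ => by ring
  rw [hodd, heven, ← Finset.sum_add_distrib]
  unfold oddChooseSum
  refine Finset.sum_congr rfl fun j _ => ?_
  rw [show m + 1 + 1 + j = m + 1 + j + 1 by omega, Nat.choose_succ_succ']
  push_cast
  ring

theorem two_add_X_mul_evenChooseSum_and_oddChooseSum (m : ℕ) :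
    (2 + X) * evenChooseSum m = (1 + X : R[X]) ^ (2 * m + 1) + 1 ∧
      (2 + X) * oddChooseSum m = (1 + X : R[X]) ^ (2 * m + 2) - 1 := by
  induction m with
  | zero =>
    simp only [evenChooseSum, oddChooseSum]
    constructor <;> simp <;> ring
  | succ m ih =>
    have heven : (2 + X) * evenChooseSum (m + 1) = (1 + X : R[X]) ^ (2 * (m + 1) + 1) + 1 := by
      rw [evenChooseSum_succ]
      linear_combination (1 + X) * ih.1 + X * ih.2
    refine ⟨heven, ?_⟩
    rw [oddChooseSum_succ]
    linear_combination (1 + X) * ih.2 + X * heven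

theorem one_add_X_mul_oddChooseSum_add_oddChooseSum_succ (m : ℕ) :
    (1 + X) * oddChooseSum m + oddChooseSum (m + 1) = (1 + X : R[X]) ^ (2 * m + 3) - 1 := by
  have hmonic : (2 + X : R[X]).Monic := by
    simpa [add_comm, C_ofNat] using monic_X_add_C (2 : R)
  refine hmonic.isRegular.left ?_
  simp only
  linear_combination (1 + X) * (two_add_X_mul_evenChooseSum_and_oddChooseSum (R := R) m).2 +
    (two_add_X_mul_evenChooseSum_and_oddChooseSum (R := R) (m + 1)).2

theorem sum_choose_add_choose_mul_X_pow_mul_one_add_X_pow (m : ℕ) :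
    ∑ j ∈ Finset.range (m + 1),
      (((m + 1 + j).choose (2 * j + 1) + (m + 2 + j).choose (2 * j + 1) : ℕ) : R[X]) *
        X ^ (2 * j + 1) * (1 + X) ^ (m + 1 - j) = (1 + X) ^ (2 * m + 3) - 1 - X ^ (2 * m + 3) := by
  simp only [Nat.cast_add, add_mul, Finset.sum_add_distrib]
  rw [← one_add_X_mul_oddChooseSum]
  linear_combination one_add_X_mul_oddChooseSum_add_oddChooseSum_succ (R := R) m -
    oddChooseSum_succ_eq_sum_add_X_pow (R := R) m

end

theorem stmt9_general (k : ℕ)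
    (a : ℕ → ℚ) (ha : ∀ j, a j = ((2 * k + 3 : ℚ) / (2 * j + 1)) * ((k + 1 + j).choose (k + 1 - j))) :
    (-1 + (1 + X) ^ (2 * k + 3)
        - ∑ j ∈ Finset.range (k + 1), C (a j) * X ^ (2 * j + 1) * (1 + X) ^ (k + 1 - j) : ℚ[X])
      = X ^ (2 * k + 3) := by
  have hcoeff : ∀ j ∈ Finset.range (k + 1),
      a j = ((k + 1 + j).choose (2 * j + 1) + (k + 2 + j).choose (2 * j + 1) : ℕ) := by
    intro j hj
    have h := Nat.two_mul_add_one_mul_choose_add_choose (n := k + 1) (j := j)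
      (by have := Finset.mem_range.mp hj; omega)
    rw [ha j, div_mul_eq_mul_div, div_eq_iff (by positivity)]
    rw [show k + 1 + 1 + j = k + 2 + j by omega] at h
    have := congrArg (Nat.cast (R := ℚ)) h
    push_cast at this ⊢
    linarith
  rw [Finset.sum_congr rfl fun j hj => by rw [hcoeff j hj, map_natCast],
    sum_choose_add_choose_mul_X_pow_mul_one_add_X_pow]
  ring

theorem stmt9 (k : ℕ) (hk : 3 ≤ k)
    (a : ℕ → ℚ) (ha : ∀ j, a j = ((2 * k + 3 : ℚ) / (2 * j + 1)) * ((k + 1 + j).choose (k + 1 - j))) :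
    (-1 + (1 + X) ^ (2 * k + 3)
        - ∑ j ∈ Finset.range (k + 1), C (a j) * X ^ (2 * j + 1) * (1 + X) ^ (k + 1 - j) : ℚ[X])
      = X ^ (2 * k + 3) :=
  stmt9_general k a ha
end

section
/- Let K be a field of characteristic p > 0 and P = Σ_{j=1}^k a_j X^{α_j}(1+X)^{β_j} with α_1 ≤ ... ≤ α_k. If p > max_j (α_j + β_j) and P is not identically zero, then val(P) ≤ max_{1≤j≤k} (α_j + (k+1−j choose 2)). -/
/-!
Induction on the number of terms `f_j = X^{α_j} (1 + X)^{β_j}`. If the `f_j` are linearly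
dependent, or a coefficient vanishes, one term can be dropped. Otherwise their Wronskian `W` is
nonzero: since `deg f_j < p`, their span contains `k` polynomials of pairwise distinct orders
`v_j < p` at `0`; their Wronskian is a multiple of `W`, and its lowest coefficient is, up to a unit,
a Vandermonde determinant in the `v_j`.
Replacing the first column of the Wronskian matrix by the derivatives of `P` multiplies `W` by
`a_1`, so `X ^ (val P + α_2 + ⋯ + α_k - C(k,2))` divides `W`; so does `(1 + X) ^ (Σ β_j - C(k,2))`,
while `deg W ≤ Σ (α_j + β_j) - C(k,2)`. Comparing degrees gives `val P ≤ α_1 + C(k,2)`.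
-/

open Polynomial Finset

theorem sum_val_perm_eq_choose_two {n : ℕ} (σ : Equiv.Perm (Fin n)) :
    ∑ j, (σ j : ℕ) = n.choose 2 := by
  rw [Equiv.sum_comp σ (fun i : Fin n => (i : ℕ)), Fin.sum_univ_eq_sum_range (fun i => i),
    sum_range_id, Nat.choose_two_right]

theorem Fin.val_succAbove_le {n : ℕ} (q : Fin (n + 1)) (j : Fin n) :
    (q.succAbove j : ℕ) ≤ j + 1 := by
  rcases lt_or_ge (Fin.castSucc j) q with h | h
  · rw [Fin.succAbove_of_castSucc_lt _ _ h, Fin.val_castSucc]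
    omega
  · rw [Fin.succAbove_of_le_castSucc _ _ h, Fin.val_succ]

theorem exists_coeff_eq_zero_of_not_linearIndependent {K M ι : Type*} [DivisionRing K]
    [AddCommGroup M] [Module K M] [Fintype ι] {f : ι → M} (hf : ¬LinearIndependent K f)
    (a : ι → K) : ∃ b : ι → K, ∃ q, b q = 0 ∧ ∑ i, b i • f i = ∑ i, a i • f i := by
  obtain ⟨c, hc, q, hq⟩ := Fintype.not_linearIndependent_iff.mp hf
  refine ⟨a - (a q / c q) • c, q, by simp [hq], ?_⟩
  simp only [Pi.sub_apply, Pi.smul_apply, sub_smul, smul_eq_mul, mul_smul, sum_sub_distrib,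
    ← smul_sum, hc, smul_zero, sub_zero]

theorem det_descFactorial_ne_zero {K : Type*} [Field K] {n : ℕ} (p : ℕ) [CharP K p]
    {v : Fin n → ℕ} (hv : Function.Injective v) (hlt : ∀ j, v j < p) :
    (Matrix.of fun i j : Fin n => ((v j).descFactorial i : K)).det ≠ 0 := by
  have hvdm := Matrix.det_eval_matrixOfPolynomials_eq_det_vandermonde (fun j => (v j : K))
    (fun i => descPochhammer K i) (fun i => descPochhammer_natDegree K i)
    (fun i => monic_descPochhammer K i)
  have htr : (Matrix.of fun i j : Fin n => ((v j).descFactorial i : K)).transpose =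
      Matrix.of fun i j : Fin n => (descPochhammer K j).eval (v i : K) := by
    ext i j
    simp [descPochhammer_eval_eq_descFactorial]
  rw [← Matrix.det_transpose, htr, ← hvdm, Matrix.det_vandermonde_ne_zero_iff]
  intro i j h
  exact hv (CharP.natCast_injOn_Iio K p (hlt i) (hlt j) h)

namespace Polynomial

variable {R : Type*} [CommRing R]

theorem coeff_X_pow_mul_iterate_derivative (g : R[X]) (i n : ℕ) :
    (X ^ i * derivative^[i] g).coeff n = n.descFactorial i • g.coeff n := by
  rw [coeff_X_pow_mul']
  split_ifs with h
  · rw [coeff_iterate_derivative, Nat.sub_add_cancel h]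
  · rw [Nat.descFactorial_eq_zero_iff_lt.mpr (not_le.mp h), zero_smul]

theorem X_pow_dvd_X_pow_mul_iterate_derivative {g : R[X]} {m : ℕ} (h : X ^ m ∣ g) (i : ℕ) :
    X ^ m ∣ X ^ i * derivative^[i] g := by
  rw [X_pow_dvd_iff] at h ⊢
  intro d hd
  rw [coeff_X_pow_mul_iterate_derivative, h d hd, smul_zero]

theorem X_pow_natTrailingDegree_dvd (g : R[X]) : X ^ g.natTrailingDegree ∣ g :=
  X_pow_dvd_iff.mpr fun _ => coeff_eq_zero_of_lt_natTrailingDegree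

noncomputable def wronskianMatrix {n : ℕ} (f : Fin n → R[X]) : Matrix (Fin n) (Fin n) R[X] :=
  Matrix.of fun i j => derivative^[i] (f j)

variable {n : ℕ}

@[simp]
theorem wronskianMatrix_apply (f : Fin n → R[X]) (i j : Fin n) :
    wronskianMatrix f i j = derivative^[i] (f j) := rfl

theorem pow_sub_dvd_det_wronskianMatrix (q : R[X]) (m : Fin n → ℕ) {f : Fin n → R[X]}
    (h : ∀ j, q ^ m j ∣ f j) : q ^ (∑ j, m j - n.choose 2) ∣ (wronskianMatrix f).det := by
  rw [Matrix.det_apply']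
  refine dvd_sum fun σ _ => Dvd.dvd.mul_left ?_ _
  have hle : ∑ j, m j ≤ ∑ j, (m j - σ j) + n.choose 2 := by
    rw [← sum_val_perm_eq_choose_two σ, ← sum_add_distrib]
    exact sum_le_sum fun j _ => by omega
  calc q ^ (∑ j, m j - n.choose 2) ∣ q ^ ∑ j, (m j - σ j) := pow_dvd_pow q (by omega)
    _ = ∏ j, q ^ (m j - σ j) := (prod_pow_eq_pow_sum _ _ _).symm
    _ ∣ ∏ j, wronskianMatrix f (σ j) j :=
      prod_dvd_prod_of_dvd _ _ fun j _ => pow_sub_dvd_iterate_derivative_of_pow_dvd _ (h j)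

theorem natDegree_det_wronskianMatrix_le (f : Fin n → R[X]) :
    (wronskianMatrix f).det.natDegree ≤ ∑ j, (f j).natDegree - n.choose 2 := by
  rw [Matrix.det_apply']
  refine natDegree_sum_le_of_forall_le _ _ fun σ _ => natDegree_mul_le.trans ?_
  rw [natDegree_intCast, zero_add]
  by_cases hσ : ∀ j, (σ j : ℕ) ≤ (f j).natDegree
  · have hsum : ∑ j, ((f j).natDegree - σ j) + n.choose 2 = ∑ j, (f j).natDegree := by
      rw [← sum_val_perm_eq_choose_two σ, ← sum_add_distrib]
      exact sum_congr rfl fun j _ => Nat.sub_add_cancel (hσ j)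
    calc (∏ j, wronskianMatrix f (σ j) j).natDegree
        ≤ ∑ j, (wronskianMatrix f (σ j) j).natDegree := natDegree_prod_le _ _
      _ ≤ ∑ j, ((f j).natDegree - σ j) :=
        sum_le_sum fun j _ => natDegree_iterate_derivative _ _
      _ = _ := by omega
  · push Not at hσ
    obtain ⟨j, hj⟩ := hσ
    rw [prod_eq_zero (mem_univ j) (iterate_derivative_eq_zero hj), natDegree_zero]
    exact Nat.zero_le _

theorem det_wronskianMatrix_update_sum (f : Fin n → R[X]) (a : Fin n → R) (c : Fin n) :
    (wronskianMatrix (Function.update f c (∑ j, a j • f j))).det =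
      C (a c) * (wronskianMatrix f).det := by
  have : wronskianMatrix (Function.update f c (∑ j, a j • f j)) =
      (wronskianMatrix f).updateCol c fun i => ∑ j, C (a j) • wronskianMatrix f i j := by
    ext1 i j
    rcases eq_or_ne j c with rfl | hj
    · simp [iterate_derivative_sum, smul_eq_C_mul]
    · simp [hj]
  rw [this, Matrix.det_updateCol_sum, smul_eq_mul]

theorem det_wronskianMatrix_dvd {f g : Fin n → R[X]}
    (hg : ∀ j, g j ∈ Submodule.span R (Set.range f)) :
    (wronskianMatrix f).det ∣ (wronskianMatrix g).det := by
  choose c hc using fun j => (Submodule.mem_span_range_iff_exists_fun R).mp (hg j)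
  have : wronskianMatrix g = wronskianMatrix f * Matrix.of fun t j => C (c j t) := by
    ext1 i j
    simp only [wronskianMatrix_apply, Matrix.mul_apply, Matrix.of_apply, ← hc j,
      iterate_derivative_sum, iterate_derivative_smul]
    simp only [smul_eq_C_mul, mul_comm]
  rw [this, Matrix.det_mul]
  exact dvd_mul_right _ _

section Field

variable {K : Type*} [Field K]

theorem finrank_le_card_of_natTrailingDegree_mem (V : Submodule K K[X]) (T : Finset ℕ)
    (hT : ∀ g ∈ V, g ≠ 0 → g.natTrailingDegree ∈ T) : Module.finrank K V ≤ #T := by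
  let coeffs : V →ₗ[K] T → K := LinearMap.pi fun t => (lcoeff K t).comp V.subtype
  have hinj : Function.Injective coeffs := by
    rw [← LinearMap.ker_eq_bot, LinearMap.ker_eq_bot']
    intro g hg
    by_contra hg0
    have hg0' : (g : K[X]) ≠ 0 := by simpa using hg0
    have := congrFun hg ⟨_, hT g g.2 hg0'⟩
    exact hg0' (trailingCoeff_eq_zero.mp this)
  simpa using LinearMap.finrank_le_finrank_of_injective hinj

theorem exists_injective_natTrailingDegree {N : ℕ} {f : Fin n → K[X]}
    (hf : LinearIndependent K f) (hdeg : ∀ j, (f j).natDegree < N) :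
    ∃ g : Fin n → K[X], (∀ j, g j ∈ Submodule.span K (Set.range f)) ∧ (∀ j, g j ≠ 0) ∧
      Function.Injective (fun j => (g j).natTrailingDegree) ∧
      ∀ j, (g j).natTrailingDegree < N := by
  classical
  set V := Submodule.span K (Set.range f)
  have hV : V ≤ degreeLT K N := Submodule.span_le.mpr <| Set.range_subset_iff.mpr fun j =>
    mem_degreeLT.mpr (degree_le_natDegree.trans_lt (by exact_mod_cast hdeg j))
  set T := (range N).filter fun t => ∃ g ∈ V, g ≠ 0 ∧ g.natTrailingDegree = t
  have hcard : n ≤ #T := by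
    have := finrank_le_card_of_natTrailingDegree_mem V T fun g hg hg0 => by
      refine mem_filter.mpr ⟨mem_range.mpr ?_, g, hg, hg0, rfl⟩
      exact (natTrailingDegree_le_natDegree g).trans_lt
        ((natDegree_lt_iff_degree_lt hg0).mpr (mem_degreeLT.mp (hV hg)))
    rwa [finrank_span_eq_card hf, Fintype.card_fin] at this
  set v : Fin n → ℕ := fun j => T.orderEmbOfFin rfl (Fin.castLE hcard j)
  have hvT : ∀ j, v j ∈ T := fun j => T.orderEmbOfFin_mem rfl _
  choose g hgV hg0 hgv using fun j => (mem_filter.mp (hvT j)).2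
  refine ⟨g, hgV, hg0, ?_, fun j => ?_⟩
  · intro i j hij
    simp only [hgv] at hij
    exact Fin.castLE_injective hcard ((T.orderEmbOfFin rfl).injective hij)
  · rw [hgv]
    exact mem_range.mp (mem_filter.mp (hvT j)).1

theorem det_wronskianMatrix_ne_zero_of_injective (p : ℕ) [CharP K p] {g : Fin n → K[X]}
    (hg0 : ∀ j, g j ≠ 0) (hinj : Function.Injective fun j => (g j).natTrailingDegree)
    (hlt : ∀ j, (g j).natTrailingDegree < p) : (wronskianMatrix g).det ≠ 0 := by
  -- `X^i D^i g_j = X^{v_j} h_ij` with `h_ij(0) = v_j.descFactorial i * trailingCoeff g_j`, where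
  -- `v_j` is the order of `g_j` at `0`; so `det h` does not vanish at `0`.
  choose h hh using fun (i j : Fin n) =>
    X_pow_dvd_X_pow_mul_iterate_derivative (X_pow_natTrailingDegree_dvd (g j)) i
  have hN : (∏ i : Fin n, (X : K[X]) ^ (i : ℕ)) * (wronskianMatrix g).det =
      (∏ j, X ^ (g j).natTrailingDegree) * (Matrix.of h).det := by
    rw [← Matrix.det_mul_column, ← Matrix.det_mul_row]
    congr 1
    ext1 i j
    exact hh i j
  have hh0 : (Matrix.of h).map (eval 0) =
      Matrix.of fun i j : Fin n =>
        (g j).trailingCoeff * ((g j).natTrailingDegree.descFactorial i : K) := by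
    ext1 i j
    rw [Matrix.map_apply, Matrix.of_apply, ← coeff_zero_eq_eval_zero,
      ← coeff_X_pow_mul _ (g j).natTrailingDegree, zero_add, ← hh i j,
      coeff_X_pow_mul_iterate_derivative, nsmul_eq_mul, mul_comm]
    rfl
  have hdet : (Matrix.of h).det ≠ 0 := by
    intro h0
    have := congrArg (eval 0) h0
    have hrow := Matrix.det_mul_row (fun j => (g j).trailingCoeff)
      (Matrix.of fun i j : Fin n => ((g j).natTrailingDegree.descFactorial i : K))
    simp only [Matrix.of_apply] at hrow
    rw [← coe_evalRingHom, RingHom.map_det, RingHom.mapMatrix_apply, coe_evalRingHom, hh0,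
      hrow, eval_zero] at this
    refine mul_ne_zero ?_ (det_descFactorial_ne_zero p hinj hlt) this
    exact prod_ne_zero_iff.mpr fun j _ => mt trailingCoeff_eq_zero.mp (hg0 j)
  refine right_ne_zero_of_mul (a := ∏ i : Fin n, (X : K[X]) ^ (i : ℕ)) ?_
  rw [hN]
  exact mul_ne_zero (prod_ne_zero_iff.mpr fun j _ => pow_ne_zero _ X_ne_zero) hdet

theorem det_wronskianMatrix_ne_zero (p : ℕ) [CharP K p] {f : Fin n → K[X]}
    (hf : LinearIndependent K f) (hdeg : ∀ j, (f j).natDegree < p) :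
    (wronskianMatrix f).det ≠ 0 := by
  obtain ⟨g, hgV, hg0, hinj, hlt⟩ := exists_injective_natTrailingDegree hf hdeg
  intro h0
  have := det_wronskianMatrix_dvd hgV
  rw [h0, zero_dvd_iff] at this
  exact det_wronskianMatrix_ne_zero_of_injective p hg0 hinj hlt this

theorem rootMultiplicity_zero_le_of_linearIndependent (p : ℕ) [CharP K p] (a : Fin n → K)
    (α β : Fin n → ℕ) (hchar : ∀ j, α j + β j < p)
    (hf : LinearIndependent K fun j => X ^ α j * (1 + X : K[X]) ^ β j) {c : Fin n}
    (hc : a c ≠ 0) :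
    (∑ j, a j • (X ^ α j * (1 + X : K[X]) ^ β j)).rootMultiplicity 0 ≤ α c + n.choose 2 := by
  set f : Fin n → K[X] := fun j => X ^ α j * (1 + X) ^ β j
  set P := ∑ j, a j • f j
  set W := (wronskianMatrix f).det
  have h1X : (1 + X : K[X]) ≠ 0 := by rw [add_comm, ← C_1]; exact X_add_C_ne_zero 1
  have hdeg1X : (1 + X : K[X]).natDegree = 1 := by rw [add_comm, ← C_1]; exact natDegree_X_add_C 1
  have hdeg : ∀ j, (f j).natDegree = α j + β j := fun j => by
    rw [natDegree_mul (pow_ne_zero _ X_ne_zero) (pow_ne_zero _ h1X), natDegree_X_pow,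
      natDegree_pow, hdeg1X, mul_one]
  have hW : W ≠ 0 := det_wronskianMatrix_ne_zero p hf fun j => hdeg j ▸ hchar j
  set m := Function.update α c (P.rootMultiplicity 0)
  have hX : X ^ (∑ j, m j - n.choose 2) ∣ W := by
    have := pow_sub_dvd_det_wronskianMatrix X m (f := Function.update f c P) fun j => by
      rcases eq_or_ne j c with rfl | hj
      · simpa [m] using pow_rootMultiplicity_dvd P 0
      · simp [m, f, hj]
    rwa [det_wronskianMatrix_update_sum, (isUnit_C.mpr hc.isUnit).dvd_mul_left] at this
  have hY : (1 + X) ^ (∑ j, β j - n.choose 2) ∣ W :=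
    pow_sub_dvd_det_wronskianMatrix _ β fun j => dvd_mul_left _ _
  have hcop : IsCoprime (X : K[X]) (1 + X) := ⟨-1, 1, by ring⟩
  have hle := natDegree_le_of_dvd (hcop.pow.mul_dvd hX hY) hW
  rw [natDegree_mul (pow_ne_zero _ X_ne_zero) (pow_ne_zero _ h1X), natDegree_X_pow,
    natDegree_pow, hdeg1X, mul_one] at hle
  have hWdeg : W.natDegree ≤ _ := natDegree_det_wronskianMatrix_le f
  simp only [hdeg, sum_add_distrib] at hWdeg
  have hm : ∑ j, m j + α c = P.rootMultiplicity 0 + ∑ j, α j := by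
    rw [sum_update_of_mem (mem_univ c), sum_eq_add_sum_sdiff_singleton_of_mem (mem_univ c) α]
    ring
  omega

theorem exists_rootMultiplicity_zero_le (p : ℕ) [CharP K p] (a : Fin n → K) (α β : Fin n → ℕ)
    (hchar : ∀ j, α j + β j < p)
    (hP : ∑ j, a j • (X ^ α j * (1 + X : K[X]) ^ β j) ≠ 0) :
    ∃ j : Fin n, (∑ j, a j • (X ^ α j * (1 + X : K[X]) ^ β j)).rootMultiplicity 0 ≤
      α j + (n - j).choose 2 := by
  induction n with
  | zero => simp at hP
  | succ n ih =>
    set f : Fin (n + 1) → K[X] := fun j => X ^ α j * (1 + X) ^ β j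
    have drop : ∀ b : Fin (n + 1) → K, ∀ q, b q = 0 → ∑ j, b j • f j = ∑ j, a j • f j →
        ∃ j : Fin (n + 1), (∑ j, a j • f j).rootMultiplicity 0 ≤ α j + (n + 1 - j).choose 2 := by
      intro b q hq hb
      rw [← hb, Fin.sum_univ_succAbove _ q, hq, zero_smul, zero_add] at hP ⊢
      obtain ⟨j, hj⟩ := ih (fun i => b (q.succAbove i)) (fun i => α (q.succAbove i))
        (fun i => β (q.succAbove i)) (fun i => hchar _) hP
      refine ⟨q.succAbove j, hj.trans (Nat.add_le_add_left (Nat.choose_le_choose 2 ?_) _)⟩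
      have := q.val_succAbove_le j
      omega
    by_cases hf : LinearIndependent K f
    · by_cases ha : a 0 = 0
      · exact drop a 0 ha rfl
      · exact ⟨0, by simpa using rootMultiplicity_zero_le_of_linearIndependent p a α β hchar hf ha⟩
    · obtain ⟨b, q, hq, hb⟩ := exists_coeff_eq_zero_of_not_linearIndependent hf a
      exact drop b q hq hb

end Field

end Polynomial

theorem stmt15_general {K : Type*} [Field K] (p : ℕ) [CharP K p] (k : ℕ)
    (a : Fin k → K) (α β : Fin k → ℕ)
    (hchar : ∀ j, α j + β j < p)
    (P : K[X]) (hPdef : P = ∑ j, C (a j) * X ^ (α j) * (1 + X) ^ (β j))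
    (hP : P ≠ 0) :
    ∃ j : Fin k, P.rootMultiplicity 0 ≤ α j + (k - (j : ℕ)).choose 2 := by
  simp only [← smul_eq_C_mul, smul_mul_assoc] at hPdef
  subst hPdef
  exact exists_rootMultiplicity_zero_le p a α β hchar hP

theorem stmt15 {K : Type*} [Field K] (p : ℕ) (hp : p.Prime) [CharP K p] (k : ℕ)
    (a : Fin k → K) (α β : Fin k → ℕ) (hα : Monotone α)
    (hchar : ∀ j, α j + β j < p)
    (P : K[X]) (hPdef : P = ∑ j, C (a j) * X ^ (α j) * (1 + X) ^ (β j))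
    (hP : P ≠ 0) :
    ∃ j : Fin k, P.rootMultiplicity 0 ≤ α j + (k - (j : ℕ)).choose 2 :=
  stmt15_general p k a α β hchar P hPdef hP
end

section
/- Let K be a field of characteristic zero, f_j = X^{α_j}(1+X)^{β_j} with α_j, β_j ≥ k for all 1 ≤ j ≤ k. Then the Wronskian of f_1,...,f_k factors as W(f_1,...,f_k) = X^{Σ_j α_j − (k choose 2)} · (1+X)^{Σ_j β_j − (k choose 2)} · D(X) for some polynomial D of degree at most (k choose 2). -/
/-!
The `i`-th derivative of `X ^ (a + i) * (1 + X) ^ (b + i)` is `X ^ a * (1 + X) ^ b` times a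
polynomial of degree at most `i` (induction on `i`, differentiating once). So the entry in row `i`,
column `j` of the Wronskian matrix is `X ^ (α j - (k - 1)) * (1 + X) ^ (β j - (k - 1))` (a column
factor) times `(X * (1 + X)) ^ (k - 1 - i)` (a row factor) times a polynomial of degree at most `i`.
Pulling the factors out of the determinant leaves `D`, of degree at most `0 + 1 + ⋯ + (k - 1)`,
and the extracted exponents add up to `∑ α - k.choose 2` and `∑ β - k.choose 2`.
-/

open Polynomial

noncomputable def wronskian {K : Type*} [Field K] {k : ℕ} (f : Fin k → K[X]) : K[X] :=
  Matrix.det (Matrix.of fun i j : Fin k => (derivative^[(i : ℕ)] (f j)))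

section

variable {R : Type*} [CommSemiring R]

lemma derivative_X_pow_mul_one_add_X_pow (a b : ℕ) :
    derivative (X ^ (a + 1) * (1 + X) ^ (b + 1) : R[X]) =
      C ((a + 1 : ℕ) : R) * (X ^ a * (1 + X) ^ (b + 1)) +
        C ((b + 1 : ℕ) : R) * (X ^ (a + 1) * (1 + X) ^ b) := by
  simp only [derivative_mul, derivative_pow, derivative_add, derivative_one,
    derivative_X, C_eq_natCast]
  push_cast
  ring

lemma exists_iterate_derivative_X_pow_mul_one_add_X_pow (i a b : ℕ) :
    ∃ q : R[X], q.natDegree ≤ i ∧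
      derivative^[i] (X ^ (a + i) * (1 + X) ^ (b + i)) = X ^ a * (1 + X) ^ b * q := by
  induction i generalizing a b with
  | zero => exact ⟨1, by simp, by simp⟩
  | succ i ih =>
    obtain ⟨q₁, hq₁, hq₁_eq⟩ := ih a (b + 1)
    obtain ⟨q₂, hq₂, hq₂_eq⟩ := ih (a + 1) b
    rw [add_right_comm b] at hq₁_eq
    rw [add_right_comm a] at hq₂_eq
    refine ⟨C ((a + i + 1 : ℕ) : R) * ((1 + X) * q₁) + C ((b + i + 1 : ℕ) : R) * (X * q₂), ?_, ?_⟩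
    · have h1X : (1 + X : R[X]).natDegree ≤ 1 := by compute_degree
      refine natDegree_add_le_of_degree_le ?_ ?_ <;> refine (natDegree_C_mul_le _ _).trans ?_
      · exact (natDegree_mul_le_of_le h1X hq₁).trans_eq (add_comm _ _)
      · exact (natDegree_mul_le_of_le natDegree_X_le hq₂).trans_eq (add_comm _ _)
    · rw [Function.iterate_succ_apply, ← add_assoc, ← add_assoc,
        derivative_X_pow_mul_one_add_X_pow, iterate_map_add, iterate_derivative_C_mul,
        iterate_derivative_C_mul, hq₁_eq, hq₂_eq]
      ring

lemma exists_iterate_derivative_X_pow_mul_one_add_X_pow_of_le {i n : ℕ} (hi : i ≤ n) (a b : ℕ) :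
    ∃ q : R[X], q.natDegree ≤ i ∧
      derivative^[i] (X ^ (a + n) * (1 + X) ^ (b + n)) =
        X ^ a * (1 + X) ^ b * ((X * (1 + X)) ^ (n - i) * q) := by
  obtain ⟨q, hq, hq_eq⟩ :=
    exists_iterate_derivative_X_pow_mul_one_add_X_pow (R := R) i (a + (n - i)) (b + (n - i))
  refine ⟨q, hq, ?_⟩
  rw [add_assoc, add_assoc, Nat.sub_add_cancel hi] at hq_eq
  rw [hq_eq, mul_pow, pow_add, pow_add]
  ring

end

lemma Matrix.natDegree_det_le_sum {n R : Type*} [Fintype n] [DecidableEq n] [CommRing R]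
    (M : Matrix n n R[X]) (d : n → ℕ) (h : ∀ i j, (M i j).natDegree ≤ d i) :
    M.det.natDegree ≤ ∑ i, d i := by
  rw [Matrix.det_apply]
  refine natDegree_sum_le_of_forall_le _ _ fun σ _ => ?_
  calc (Equiv.Perm.sign σ • ∏ i, M (σ i) i).natDegree
      ≤ (∏ i, M (σ i) i).natDegree := by
        rcases Int.units_eq_one_or (Equiv.Perm.sign σ) with h | h <;> simp [h]
    _ ≤ ∑ i, (M (σ i) i).natDegree := natDegree_prod_le _ _
    _ ≤ ∑ i, d (σ i) := Finset.sum_le_sum fun i _ => h _ _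
    _ = ∑ i, d i := Equiv.sum_comp σ d

lemma Fin.sum_univ_val_eq_choose_two (k : ℕ) : ∑ i : Fin k, (i : ℕ) = k.choose 2 := by
  rw [Fin.sum_univ_eq_sum_range (fun i => i) k, Finset.sum_range_id, Nat.choose_two_right]

lemma Fin.sum_tsub_add_sum_tsub_val {k : ℕ} (a : Fin k → ℕ) (ha : ∀ j, k - 1 ≤ a j) :
    ∑ j, (a j - (k - 1)) + ∑ i : Fin k, (k - 1 - i) = ∑ j, a j - k.choose 2 := by
  have hrev : ∑ i : Fin k, (k - 1 - i) = k.choose 2 := by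
    rw [Fin.sum_univ_eq_sum_range (fun i => k - 1 - i) k, Finset.sum_range_reflect (fun i => i) k,
      Finset.sum_range_id, Nat.choose_two_right]
  have hsub : ∑ j, (a j - (k - 1)) = ∑ j, a j - k * (k - 1) := by
    rw [Finset.sum_tsub_distrib _ fun j _ => ha j]
    simp
  have hbound : k * (k - 1) ≤ ∑ j, a j := by
    simpa using Finset.card_nsmul_le_sum Finset.univ a (k - 1) fun j _ => ha j
  have htwice : k * (k - 1) = k.choose 2 * 2 := by
    rw [← Finset.sum_range_id_mul_two, Finset.sum_range_id, Nat.choose_two_right]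
  omega

theorem stmt18_general {K : Type*} [Field K] {k : ℕ} (α β : Fin k → ℕ)
    (hα : ∀ j, k ≤ α j) (hβ : ∀ j, k ≤ β j)
    (f : Fin k → K[X]) (hf : ∀ j, f j = X ^ (α j) * (1 + X) ^ (β j)) :
    ∃ D : K[X], wronskian f
        = X ^ ((∑ j, α j) - k.choose 2) * (1 + X) ^ ((∑ j, β j) - k.choose 2) * D ∧
      D.degree ≤ (k.choose 2 : ℕ) := by
  have hα' j : k - 1 ≤ α j := (hα j).trans' (Nat.sub_le k 1)
  have hβ' j : k - 1 ≤ β j := (hβ j).trans' (Nat.sub_le k 1)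
  have hentry (i j : Fin k) : ∃ q : K[X], q.natDegree ≤ i ∧
      derivative^[i] (f j) = X ^ (α j - (k - 1)) * (1 + X) ^ (β j - (k - 1)) *
        ((X * (1 + X)) ^ (k - 1 - i) * q) := by
    have := exists_iterate_derivative_X_pow_mul_one_add_X_pow_of_le (R := K)
      (Nat.le_sub_one_of_lt i.isLt) (α j - (k - 1)) (β j - (k - 1))
    rwa [Nat.sub_add_cancel (hα' j), Nat.sub_add_cancel (hβ' j), ← hf j] at this
  choose q hq_deg hq using hentry
  refine ⟨(Matrix.of q).det, ?_, ?_⟩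
  · have hW : wronskian f = (∏ j, X ^ (α j - (k - 1)) * (1 + X) ^ (β j - (k - 1))) *
        ((∏ i : Fin k, (X * (1 + X)) ^ (k - 1 - i)) * (Matrix.of q).det) := by
      rw [_root_.wronskian, ← Matrix.det_mul_column, ← Matrix.det_mul_row]
      exact congrArg Matrix.det (Matrix.ext fun i j => hq i j)
    rw [hW, Finset.prod_mul_distrib, Finset.prod_pow_eq_pow_sum, Finset.prod_pow_eq_pow_sum,
      Finset.prod_pow_eq_pow_sum, mul_pow, ← Fin.sum_tsub_add_sum_tsub_val α hα',
      ← Fin.sum_tsub_add_sum_tsub_val β hβ', pow_add, pow_add]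
    ring
  · refine degree_le_of_natDegree_le ?_
    rw [← Fin.sum_univ_val_eq_choose_two]
    exact Matrix.natDegree_det_le_sum _ _ hq_deg

theorem stmt18 {K : Type*} [Field K] [CharZero K] {k : ℕ} (α β : Fin k → ℕ)
    (hα : ∀ j, k ≤ α j) (hβ : ∀ j, k ≤ β j)
    (f : Fin k → K[X]) (hf : ∀ j, f j = X ^ (α j) * (1 + X) ^ (β j)) :
    ∃ D : K[X], wronskian f
        = X ^ ((∑ j, α j) - k.choose 2) * (1 + X) ^ ((∑ j, β j) - k.choose 2) * D ∧
      D.degree ≤ (k.choose 2 : ℕ) :=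
  stmt18_general α β hα hβ f hf
end
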